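/- arXiv:1305.3442 — 2 statements merged into one kernel-verified Lean document; each statement's English description precedes it below -/
import Mathlib

section
/- Let X, Z be mutually unbiased bases of C^d. Let ρ_S be a density operator on C^d, and consider the state after sequential coherent measurements of X and Z with devices M_1, M_2 each of dimension d initialized in |0⟩: ρ^{(2)} = ∑_{j,k,l,m} [Z_l][X_j] ρ_S [X_k][Z_m] ⊗ |j⟩⟨k| ⊗ |l⟩⟨m|, where [X_j] = |X_j⟩⟨X_j| etc. Define the local unitary W = U_{M1M2}·(H_{M1}⊗I) on M_1⊗M_2, where H = ∑_j |X_j⟩⟨j| and U = ∑_j σ_X^j ⊗ |j⟩⟨j| with σ_X^j := √d ∑_k ⟨X_k|Z_j⟩ [X_k]. Then (I_S ⊗ W) ρ^{(2)} (I_S ⊗ W)† = |Φ⟩⟨Φ|_{S M_2} ⊗ (ρ_S)_{M_1}, where |Φ⟩ = (1/√d) ∑_j |Z_j⟩⊗|j⟩ is a maximally entangled state between S and M_2. -/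
open scoped BigOperators
open Matrix Finset

noncomputable def shannon {n : Type*} [Fintype n] (p : n → ℝ) : ℝ :=
  -∑ k, p k * Real.logb 2 (p k)

noncomputable def overlap {d : ℕ} (X Z : Fin d → Fin d → ℂ) (j k : Fin d) : ℂ :=
  ∑ i, star (X j i) * Z k i

/-- `X` is an orthonormal basis of `ℂ^d` (d orthonormal vectors). -/
def IsONB {d : ℕ} (X : Fin d → Fin d → ℂ) : Prop :=
  ∀ j k, (∑ i, star (X j i) * X k i) = if j = k then (1 : ℂ) else 0
open scoped ComplexOrder

/-- the rank-one projector |X_j⟩⟨X_j|. -/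
noncomputable def proj {d : ℕ} (X : Fin d → Fin d → ℂ) (j : Fin d) :
    Matrix (Fin d) (Fin d) ℂ :=
  Matrix.of fun a b => X j a * star (X j b)

/-- the post-measurement state ρ⁽²⁾ = ∑ [Z_l][X_j] ρ [X_k][Z_m] ⊗ |j⟩⟨k| ⊗ |l⟩⟨m|
on S ⊗ M₁ ⊗ M₂, written entrywise. -/
noncomputable def postState {d : ℕ} (X Z : Fin d → Fin d → ℂ)
    (ρ : Matrix (Fin d) (Fin d) ℂ) :
    Matrix (Fin d × Fin d × Fin d) (Fin d × Fin d × Fin d) ℂ :=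
  Matrix.of fun p q =>
    (proj Z p.2.2 * proj X p.2.1 * ρ * proj X q.2.1 * proj Z q.2.2) p.1 q.1

/-- H = ∑_j |X_j⟩⟨j| acting on M₁. -/
noncomputable def hadamardLike {d : ℕ} (X : Fin d → Fin d → ℂ) :
    Matrix (Fin d) (Fin d) ℂ := Matrix.of fun a j => X j a

/-- σ_X^j := √d ∑_k ⟨X_k|Z_j⟩ |X_k⟩⟨X_k|. -/
noncomputable def sigmaXpow {d : ℕ} (X Z : Fin d → Fin d → ℂ) (j : Fin d) :
    Matrix (Fin d) (Fin d) ℂ :=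
  Matrix.of fun a b => (Real.sqrt d : ℂ) * ∑ k, overlap X Z k j * (X k a * star (X k b))

/-- the controlled unitary U = ∑_j σ_X^j ⊗ |j⟩⟨j| on M₁ ⊗ M₂. -/
noncomputable def ctrlU {d : ℕ} (X Z : Fin d → Fin d → ℂ) :
    Matrix (Fin d × Fin d) (Fin d × Fin d) ℂ :=
  Matrix.of fun p q => (if p.2 = q.2 then 1 else 0) * sigmaXpow X Z p.2 p.1 q.1

/-- the local unitary W = U · (H ⊗ I) on M₁ ⊗ M₂. -/
noncomputable def localW {d : ℕ} (X Z : Fin d → Fin d → ℂ) :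
    Matrix (Fin d × Fin d) (Fin d × Fin d) ℂ :=
  ctrlU X Z * Matrix.of (fun p q : Fin d × Fin d =>
    hadamardLike X p.1 q.1 * (if p.2 = q.2 then 1 else 0))

/-- I_S ⊗ W on S ⊗ M₁ ⊗ M₂. -/
noncomputable def bigW {d : ℕ} (X Z : Fin d → Fin d → ℂ) :
    Matrix (Fin d × Fin d × Fin d) (Fin d × Fin d × Fin d) ℂ :=
  Matrix.of fun p q =>
    (if p.1 = q.1 then 1 else 0) * localW X Z (p.2.1, p.2.2) (q.2.1, q.2.2)

section Aux

lemma onb_complete {d : ℕ} {X : Fin d → Fin d → ℂ} (hX : IsONB X) (a b : Fin d) :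
    (∑ j, X j a * star (X j b)) = if a = b then (1 : ℂ) else 0 := by
  set M : Matrix (Fin d) (Fin d) ℂ := Matrix.of fun i j => X j i with hM
  have h1 : Mᴴ * M = 1 := by
    ext j k
    have := hX j k
    simpa [Matrix.mul_apply, Matrix.conjTranspose_apply, hM, Matrix.one_apply] using this
  have h2 : M * Mᴴ = 1 := mul_eq_one_comm.mp h1
  have h3 := congrFun (congrFun h2 a) b
  simpa [Matrix.mul_apply, Matrix.conjTranspose_apply, hM, Matrix.one_apply] using h3

lemma ov_mul_conj {d : ℕ} {X Z : Fin d → Fin d → ℂ}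
    (hMUB : ∀ j k, ‖overlap X Z j k‖ ^ 2 = 1 / d) (j k : Fin d) :
    overlap X Z j k * star (overlap X Z j k) = (1 / d : ℂ) := by
  have h := hMUB j k
  have h2 : overlap X Z j k * star (overlap X Z j k) = ((‖overlap X Z j k‖ ^ 2 : ℝ) : ℂ) := by
    rw [show (star (overlap X Z j k)) = (starRingEnd ℂ) (overlap X Z j k) from rfl,
      Complex.mul_conj, Complex.normSq_eq_norm_sq]
  rw [h2, h]
  push_cast
  ring

lemma localW_apply {d : ℕ} (X Z : Fin d → Fin d → ℂ) (hX : IsONB X) (a b c e : Fin d) :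
    localW X Z (a, b) (c, e) =
      (if b = e then 1 else 0) *
        ((Real.sqrt d : ℂ) * overlap X Z c b * X c a) := by
  rw [localW, Matrix.mul_apply]
  rw [Fintype.sum_prod_type]
  simp only [ctrlU, sigmaXpow, hadamardLike, Matrix.of_apply, mul_ite, mul_one, mul_zero,
    ite_mul, zero_mul, Finset.sum_ite_eq, Finset.sum_ite_eq', Finset.mem_univ, if_true]
  by_cases hbe : b = e
  · subst hbe
    simp only [if_true, one_mul]
    have step : ∀ x, ((Real.sqrt d : ℂ) * ∑ k, overlap X Z k b * (X k a * star (X k x))) * X c x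
        = ∑ k, (Real.sqrt d : ℂ) * (overlap X Z k b * X k a) * (star (X k x) * X c x) := by
      intro x
      rw [Finset.mul_sum, Finset.sum_mul]
      exact Finset.sum_congr rfl fun k _ => by ring
    rw [Finset.sum_congr rfl fun x (_ : x ∈ Finset.univ) => step x, Finset.sum_comm]
    have step2 : ∀ k, (∑ x, (Real.sqrt d : ℂ) * (overlap X Z k b * X k a) * (star (X k x) * X c x))
        = (Real.sqrt d : ℂ) * (overlap X Z k b * X k a) * (if k = c then 1 else 0) := by
      intro k
      rw [← Finset.mul_sum, hX k c]
    rw [Finset.sum_congr rfl fun k (_ : k ∈ Finset.univ) => step2 k]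
    simp only [mul_ite, mul_one, mul_zero]
    rw [Finset.sum_ite_eq' Finset.univ c fun k => (Real.sqrt d : ℂ) * (overlap X Z k b * X k a)]
    simp [mul_assoc]
  · simp [hbe]

lemma key_sum {d : ℕ} {X : Fin d → Fin d → ℂ} (hX : IsONB X) (ρ : Matrix (Fin d) (Fin d) ℂ)
    (m1 n1 : Fin d) :
    ∑ j, ∑ k, X j m1 * star (X k n1) * (∑ a, ∑ b, star (X j a) * ρ a b * X k b) = ρ m1 n1 := by
  have h1 : ∀ j k, X j m1 * star (X k n1) * (∑ a, ∑ b, star (X j a) * ρ a b * X k b)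
      = ∑ a, ∑ b, (X j m1 * star (X j a)) * ρ a b * (X k b * star (X k n1)) := by
    intro j k
    rw [Finset.mul_sum]
    refine Finset.sum_congr rfl fun a _ => ?_
    rw [Finset.mul_sum]
    exact Finset.sum_congr rfl fun b _ => by ring
  have h2 : ∀ j, (∑ k, ∑ a, ∑ b, (X j m1 * star (X j a)) * ρ a b * (X k b * star (X k n1)))
      = ∑ a, (X j m1 * star (X j a)) * ρ a n1 := by
    intro j
    rw [Finset.sum_comm]
    refine Finset.sum_congr rfl fun a _ => ?_
    rw [Finset.sum_comm]
    have h3 : ∀ b, (∑ k, (X j m1 * star (X j a)) * ρ a b * (X k b * star (X k n1)))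
        = (X j m1 * star (X j a)) * ρ a b * (if b = n1 then 1 else 0) := by
      intro b
      rw [← Finset.mul_sum, onb_complete hX]
    rw [Finset.sum_congr rfl fun b _ => h3 b]
    simp only [mul_ite, mul_one, mul_zero]
    rw [Finset.sum_ite_eq' Finset.univ n1 fun b => (X j m1 * star (X j a)) * ρ a b]
    simp
  calc ∑ j, ∑ k, X j m1 * star (X k n1) * (∑ a, ∑ b, star (X j a) * ρ a b * X k b)
      = ∑ j, ∑ a, (X j m1 * star (X j a)) * ρ a n1 := by
        refine Finset.sum_congr rfl fun j _ => ?_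
        rw [Finset.sum_congr rfl fun k _ => h1 j k, h2 j]
    _ = ∑ a, (∑ j, X j m1 * star (X j a)) * ρ a n1 := by
        rw [Finset.sum_comm]
        exact Finset.sum_congr rfl fun a _ => (Finset.sum_mul _ _ _).symm
    _ = ρ m1 n1 := by
        rw [Finset.sum_congr rfl fun a (_ : a ∈ Finset.univ) => by rw [onb_complete hX m1 a]]
        simp [ite_mul, Finset.sum_ite_eq]

lemma post_apply {d : ℕ} (X Z : Fin d → Fin d → ℂ) (ρ : Matrix (Fin d) (Fin d) ℂ)
    (s m1 m2 t n1 n2 : Fin d) :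
    postState X Z ρ (s, m1, m2) (t, n1, n2) =
      Z m2 s * star (overlap X Z m1 m2) *
        (∑ a, ∑ b, star (X m1 a) * ρ a b * X n1 b) *
        overlap X Z n1 n2 * star (Z n2 t) := by
  have hov1 : (∑ a, star (Z m2 a) * X m1 a) = star (overlap X Z m1 m2) := by
    rw [overlap, star_sum]
    exact Finset.sum_congr rfl fun a _ => by simp [StarMul.star_mul, mul_comm]
  have e1 : ∀ u, (proj Z m2 * proj X m1) s u
      = Z m2 s * star (overlap X Z m1 m2) * star (X m1 u) := by
    intro u
    rw [Matrix.mul_apply]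
    simp only [proj, Matrix.of_apply]
    rw [show (∑ a, Z m2 s * star (Z m2 a) * (X m1 a * star (X m1 u)))
        = (Z m2 s * star (X m1 u)) * ∑ a, star (Z m2 a) * X m1 a from by
      rw [Finset.mul_sum]; exact Finset.sum_congr rfl fun a _ => by ring]
    rw [hov1]; ring
  have e2 : ∀ v, (proj Z m2 * proj X m1 * ρ) s v
      = Z m2 s * star (overlap X Z m1 m2) * ∑ u, star (X m1 u) * ρ u v := by
    intro v
    rw [Matrix.mul_apply]
    rw [Finset.sum_congr rfl fun u (_ : u ∈ Finset.univ) => by rw [e1 u]]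
    rw [Finset.mul_sum]
    exact Finset.sum_congr rfl fun u _ => by ring
  have e3 : ∀ w, (proj Z m2 * proj X m1 * ρ * proj X n1) s w
      = Z m2 s * star (overlap X Z m1 m2) *
          (∑ u, ∑ v, star (X m1 u) * ρ u v * X n1 v) * star (X n1 w) := by
    intro w
    rw [Matrix.mul_apply]
    rw [Finset.sum_congr rfl fun v (_ : v ∈ Finset.univ) => by rw [e2 v]]
    simp only [proj, Matrix.of_apply]
    rw [show (∑ v, Z m2 s * star (overlap X Z m1 m2) * (∑ u, star (X m1 u) * ρ u v)
          * (X n1 v * star (X n1 w)))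
        = Z m2 s * star (overlap X Z m1 m2) * star (X n1 w) *
          ∑ v, (∑ u, star (X m1 u) * ρ u v) * X n1 v from by
      rw [Finset.mul_sum]; exact Finset.sum_congr rfl fun v _ => by ring]
    rw [show (∑ v, (∑ u, star (X m1 u) * ρ u v) * X n1 v)
        = ∑ u, ∑ v, star (X m1 u) * ρ u v * X n1 v from by
      rw [Finset.sum_comm]
      exact Finset.sum_congr rfl fun v _ => by rw [Finset.sum_mul]]
    ring
  show (proj Z m2 * proj X m1 * ρ * proj X n1 * proj Z n2) s t = _
  set S := ∑ u, ∑ v, star (X m1 u) * ρ u v * X n1 v with hS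
  rw [Matrix.mul_apply]
  calc (∑ w, (proj Z m2 * proj X m1 * ρ * proj X n1) s w * proj Z n2 w t)
      = ∑ w, (Z m2 s * star (overlap X Z m1 m2) * S * star (X n1 w))
          * (Z n2 w * star (Z n2 t)) := by
        exact Finset.sum_congr rfl fun w _ => by rw [e3 w]; rfl
    _ = (Z m2 s * star (overlap X Z m1 m2) * S * star (Z n2 t))
          * ∑ w, star (X n1 w) * Z n2 w := by
        conv_rhs => rw [Finset.mul_sum]
        exact Finset.sum_congr rfl fun w _ => by ring
    _ = Z m2 s * star (overlap X Z m1 m2) * S * overlap X Z n1 n2 * star (Z n2 t) := by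
        rw [show (∑ w, star (X n1 w) * Z n2 w) = overlap X Z n1 n2 from rfl]
        ring

lemma sum_collapse3 {d : ℕ} (a c : Fin d) (g : Fin d → ℂ) (f : Fin d × Fin d × Fin d → ℂ) :
    (∑ p' : Fin d × Fin d × Fin d,
        ((if a = p'.1 then 1 else 0) * ((if c = p'.2.2 then 1 else 0) * g p'.2.1)) * f p')
      = ∑ b', g b' * f (a, b', c) := by
  rw [Fintype.sum_prod_type]
  simp only [ite_mul, one_mul, zero_mul, mul_ite, mul_zero, Finset.sum_ite_eq,
    Finset.mem_univ, if_true]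
  calc (∑ x, ∑ y : Fin d × Fin d, (if c = y.2 then if a = x then g y.1 * f (x, y) else 0 else 0))
      = ∑ x, ∑ y1, (if a = x then g y1 * f (x, y1, c) else 0) := by
        refine Finset.sum_congr rfl fun x _ => ?_
        rw [Fintype.sum_prod_type]
        refine Finset.sum_congr rfl fun y1 _ => ?_
        exact (Finset.sum_ite_eq Finset.univ c
          fun y2 => if a = x then g y1 * f (x, y1, y2) else 0).trans (by simp)
    _ = ∑ y1, g y1 * f (a, y1, c) := by
        rw [Finset.sum_comm]
        refine Finset.sum_congr rfl fun y1 _ => ?_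
        simp [Finset.sum_ite_eq]

end Aux

/-- Proposition 1: for MUBs, the local unitary W on M₁M₂ maps the
post-measurement state to |Φ⟩⟨Φ|_{S M₂} ⊗ (ρ_S)_{M₁}, with |Φ⟩ = (1/√d) ∑_j |Z_j⟩|j⟩. -/
theorem coherent_teleportation_of_mub {d : ℕ} (hd : 0 < d)
    (X Z : Fin d → Fin d → ℂ) (hX : IsONB X) (hZ : IsONB Z)
    (hMUB : ∀ j k, ‖overlap X Z j k‖ ^ 2 = 1 / d)
    (ρ : Matrix (Fin d) (Fin d) ℂ) (hρ : ρ.PosSemidef) (hρ1 : ρ.trace = 1) :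
    bigW X Z * postState X Z ρ * (bigW X Z)ᴴ =
      Matrix.of (fun p q : Fin d × Fin d × Fin d =>
        (1 / d : ℂ) * Z p.2.2 p.1 * star (Z q.2.2 q.1) * ρ p.2.1 q.2.1) := by
  have hd' : (d : ℂ) ≠ 0 := Nat.cast_ne_zero.mpr hd.ne'
  have hsq : (Real.sqrt d : ℂ) * (Real.sqrt d : ℂ) = (d : ℂ) := by
    rw [← Complex.ofReal_mul, Real.mul_self_sqrt (Nat.cast_nonneg d)]
    norm_num
  have hW : ∀ (a b c a' b' c' : Fin d), bigW X Z (a, b, c) (a', b', c') =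
      (if a = a' then 1 else 0) * ((if c = c' then 1 else 0) *
        ((Real.sqrt d : ℂ) * overlap X Z b' c * X b' b)) := by
    intro a b c a' b' c'
    show (if a = a' then 1 else 0) * localW X Z (b, c) (b', c') = _
    rw [localW_apply X Z hX]
  have hWstar : ∀ (a b c a' b' c' : Fin d), star (bigW X Z (a, b, c) (a', b', c')) =
      (if a = a' then 1 else 0) * ((if c = c' then 1 else 0) *
        star ((Real.sqrt d : ℂ) * overlap X Z b' c * X b' b)) := by
    intro a b c a' b' c'
    rw [hW]
    split_ifs <;> simp
  ext p q
  obtain ⟨s, m1, m2⟩ := p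
  obtain ⟨t, n1, n2⟩ := q
  rw [Matrix.mul_apply]
  have hBP : ∀ q' : Fin d × Fin d × Fin d, (bigW X Z * postState X Z ρ) (s, m1, m2) q'
      = ∑ m1', ((Real.sqrt d : ℂ) * overlap X Z m1' m2 * X m1' m1) *
          postState X Z ρ (s, m1', m2) q' := by
    intro q'
    rw [Matrix.mul_apply]
    refine (Finset.sum_congr rfl fun p' _ => ?_).trans
      (sum_collapse3 s m2 (fun b' => (Real.sqrt d : ℂ) * overlap X Z b' m2 * X b' m1)
        (fun p' => postState X Z ρ p' q'))
    obtain ⟨a, b, c⟩ := p'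
    rw [hW]
  have step2 : ∀ q' : Fin d × Fin d × Fin d,
      (bigW X Z * postState X Z ρ) (s, m1, m2) q' * (bigW X Z)ᴴ q' (t, n1, n2)
      = ((if t = q'.1 then 1 else 0) * ((if n2 = q'.2.2 then 1 else 0) *
          star ((Real.sqrt d : ℂ) * overlap X Z q'.2.1 n2 * X q'.2.1 n1))) *
        (∑ m1', ((Real.sqrt d : ℂ) * overlap X Z m1' m2 * X m1' m1) *
          postState X Z ρ (s, m1', m2) q') := by
    intro q'
    obtain ⟨a, b, c⟩ := q'
    rw [Matrix.conjTranspose_apply, hWstar, hBP]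
    ring
  rw [Finset.sum_congr rfl fun q' (_ : q' ∈ Finset.univ) => step2 q']
  rw [sum_collapse3 t n2 (fun b' => star ((Real.sqrt d : ℂ) * overlap X Z b' n2 * X b' n1))
    (fun q' => ∑ m1', ((Real.sqrt d : ℂ) * overlap X Z m1' m2 * X m1' m1) *
      postState X Z ρ (s, m1', m2) q')]
  have main : ∀ n1' m1' : Fin d,
      star ((Real.sqrt d : ℂ) * overlap X Z n1' n2 * X n1' n1) *
        (((Real.sqrt d : ℂ) * overlap X Z m1' m2 * X m1' m1) *
          postState X Z ρ (s, m1', m2) (t, n1', n2))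
      = ((1 / d : ℂ) * Z m2 s * star (Z n2 t)) *
          (X m1' m1 * star (X n1' n1) * (∑ a, ∑ b, star (X m1' a) * ρ a b * X n1' b)) := by
    intro n1' m1'
    rw [post_apply]
    have h1 := ov_mul_conj hMUB m1' m2
    have h2 := ov_mul_conj hMUB n1' n2
    calc _ = ((Real.sqrt d : ℂ) * (Real.sqrt d : ℂ)) *
            (overlap X Z m1' m2 * star (overlap X Z m1' m2)) *
            (overlap X Z n1' n2 * star (overlap X Z n1' n2)) *
            (Z m2 s * star (Z n2 t) *
              (X m1' m1 * star (X n1' n1) * (∑ a, ∑ b, star (X m1' a) * ρ a b * X n1' b))) := by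
          simp only [star_mul', Complex.star_def, Complex.conj_ofReal]
          ring
      _ = _ := by
          rw [h1, h2, hsq]
          field_simp
  rw [Finset.sum_congr rfl fun n1' (_ : n1' ∈ Finset.univ) =>
    Finset.mul_sum Finset.univ
      (fun m1' => (Real.sqrt d : ℂ) * overlap X Z m1' m2 * X m1' m1 *
        postState X Z ρ (s, m1', m2) (t, n1', n2))
      (star ((Real.sqrt d : ℂ) * overlap X Z n1' n2 * X n1' n1))]
  rw [Finset.sum_congr rfl fun n1' (_ : n1' ∈ Finset.univ) =>
    Finset.sum_congr rfl fun m1' (_ : m1' ∈ Finset.univ) => main n1' m1']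
  rw [Finset.sum_comm]
  rw [Finset.sum_congr rfl fun j (_ : j ∈ Finset.univ) =>
    (Finset.mul_sum Finset.univ
      (fun k => X j m1 * star (X k n1) * (∑ a, ∑ b, star (X j a) * ρ a b * X k b))
      ((1 / d : ℂ) * Z m2 s * star (Z n2 t))).symm]
  rw [← Finset.mul_sum, key_sum hX ρ m1 n1]
  simp only [Matrix.of_apply]
end

section
/- Let X, Z be orthonormal bases of C^d with ρ^{(2)} the sequential-measurement state as above. The reduced state on S satisfies ρ^{(2)}_S = D_Z(D_X(ρ_S)), and the entanglement entropy across the S : M_1M_2 cut, E = H(ρ^{(2)}_S) (valid since ρ^{(2)} is pure whenever ρ_S is pure), satisfies E ≥ log(1/c) for pure ρ_S, where c = max_{j,k}|⟨X_j|Z_k⟩|². -/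
open scoped BigOperators
open Matrix Finset

open scoped ComplexOrder

/-- complete dephasing in the X basis. -/
noncomputable def deph {d : ℕ} (X : Fin d → Fin d → ℂ) (ρ : Matrix (Fin d) (Fin d) ℂ) :
    Matrix (Fin d) (Fin d) ℂ := ∑ j, proj X j * ρ * proj X j

/-- partial trace over M₁M₂, giving the reduced state on S. -/
noncomputable def trM1M2 {d : ℕ}
    (M : Matrix (Fin d × Fin d × Fin d) (Fin d × Fin d × Fin d) ℂ) :
    Matrix (Fin d) (Fin d) ℂ :=
  Matrix.of fun s s' => ∑ a, ∑ l, M (s, a, l) (s', a, l)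

/-- von Neumann entropy (base-2). -/
noncomputable def vnEntropy {n : Type*} [Fintype n] [DecidableEq n] (ρ : Matrix n n ℂ) : ℝ :=
  if h : ρ.IsHermitian then -∑ i, (h.eigenvalues i) * Real.logb 2 (h.eigenvalues i) else 0

/-!
Tracing out both registers leaves `D_Z (D_X ρ)`. In the state `D_X ρ` every `Z`-outcome has
probability `∑ⱼ ⟨Xⱼ|ρ|Xⱼ⟩ |⟨Xⱼ|Zₗ⟩|² ≤ c`, so the quadratic form of `D_Z (D_X ρ)` is bounded by `c`
times the squared norm (Parseval in the `Z` basis). Hence every eigenvalue of the reduced state is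
at most `c`, and a probability vector with all entries at most `c` has Shannon entropy at least
`log (1/c)`.
-/

section Dephasing

variable {d : ℕ}

lemma proj_mulVec (W : Fin d → Fin d → ℂ) (j : Fin d) (v : Fin d → ℂ) :
    proj W j *ᵥ v = (star (W j) ⬝ᵥ v) • W j := by
  funext a
  simp only [mulVec, proj, of_apply, dotProduct, Pi.smul_apply, Pi.star_apply, smul_eq_mul,
    sum_mul]
  exact sum_congr rfl fun b _ => by ring

lemma conjTranspose_proj (W : Fin d → Fin d → ℂ) (j : Fin d) : (proj W j)ᴴ = proj W j := by
  ext a b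
  simp [proj, conjTranspose_apply, mul_comm]

lemma proj_mul_self {W : Fin d → Fin d → ℂ} (hW : IsONB W) (j : Fin d) :
    proj W j * proj W j = proj W j := by
  ext a b
  simp only [mul_apply, proj, of_apply]
  calc ∑ m, W j a * star (W j m) * (W j m * star (W j b))
      = (∑ m, star (W j m) * W j m) * (W j a * star (W j b)) := by
        rw [sum_mul]; exact sum_congr rfl fun m _ => by ring
    _ = W j a * star (W j b) := by rw [hW j j]; simp

-- `IsONB W` says `Bᴴ * B = 1` for the matrix `B` with columns `W j`; completeness is `B * Bᴴ = 1`.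
lemma sum_proj_eq_one {W : Fin d → Fin d → ℂ} (hW : IsONB W) : ∑ j, proj W j = 1 := by
  let B : Matrix (Fin d) (Fin d) ℂ := of fun i j => W j i
  have hBB : Bᴴ * B = 1 := by
    ext j k
    simpa only [mul_apply, conjTranspose_apply, B, of_apply, one_apply] using hW j k
  rw [← mul_eq_one_comm.mp hBB]
  ext a b
  simp [Matrix.sum_apply, proj, mul_apply, B, conjTranspose_apply]

lemma trace_proj_mul (W : Fin d → Fin d → ℂ) (j : Fin d) (A : Matrix (Fin d) (Fin d) ℂ) :
    (proj W j * A).trace = star (W j) ⬝ᵥ (A *ᵥ W j) := by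
  simp only [trace, Matrix.diag, mul_apply, proj, of_apply, dotProduct, mulVec, Pi.star_apply,
    mul_sum]
  rw [sum_comm]
  exact sum_congr rfl fun b _ => sum_congr rfl fun a _ => by ring

lemma trace_eq_sum_star_dotProduct_mulVec {W : Fin d → Fin d → ℂ} (hW : IsONB W)
    (A : Matrix (Fin d) (Fin d) ℂ) : A.trace = ∑ j, star (W j) ⬝ᵥ (A *ᵥ W j) := by
  conv_lhs => rw [← Matrix.one_mul A, ← sum_proj_eq_one hW, sum_mul, trace_sum]
  simp only [trace_proj_mul]

lemma trace_deph {W : Fin d → Fin d → ℂ} (hW : IsONB W) (A : Matrix (Fin d) (Fin d) ℂ) :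
    (deph W A).trace = A.trace := by
  rw [trace_eq_sum_star_dotProduct_mulVec hW A, deph, trace_sum]
  refine sum_congr rfl fun j _ => ?_
  rw [trace_mul_cycle, proj_mul_self hW, trace_proj_mul]

lemma Matrix.PosSemidef.deph (W : Fin d → Fin d → ℂ) {A : Matrix (Fin d) (Fin d) ℂ}
    (hA : A.PosSemidef) : (deph W A).PosSemidef := by
  refine sum_induction _ PosSemidef (fun _ _ => PosSemidef.add) PosSemidef.zero
    fun j _ => ?_
  simpa only [conjTranspose_proj] using hA.mul_mul_conjTranspose_same (proj W j)

lemma deph_mulVec (W : Fin d → Fin d → ℂ) (A : Matrix (Fin d) (Fin d) ℂ) (v : Fin d → ℂ) :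
    deph W A *ᵥ v = ∑ j, ((star (W j) ⬝ᵥ (A *ᵥ W j)) * (star (W j) ⬝ᵥ v)) • W j := by
  simp only [deph, sum_mulVec, ← mulVec_mulVec, proj_mulVec, mulVec_smul, smul_smul, mul_comm]

lemma re_star_dotProduct_deph_mulVec (W : Fin d → Fin d → ℂ) (A : Matrix (Fin d) (Fin d) ℂ)
    (v : Fin d → ℂ) :
    (star v ⬝ᵥ (deph W A *ᵥ v)).re =
      ∑ j, (star (W j) ⬝ᵥ (A *ᵥ W j)).re * Complex.normSq (star (W j) ⬝ᵥ v) := by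
  simp only [deph_mulVec, dotProduct_sum, dotProduct_smul, smul_eq_mul, Complex.re_sum]
  refine sum_congr rfl fun j _ => ?_
  rw [star_dotProduct v (W j), mul_assoc, Complex.star_def, Complex.mul_conj,
    Complex.re_mul_ofReal]

lemma re_star_dotProduct_self {W : Fin d → Fin d → ℂ} (hW : IsONB W) (v : Fin d → ℂ) :
    (star v ⬝ᵥ v).re = ∑ j, Complex.normSq (star (W j) ⬝ᵥ v) := by
  have hdeph_one : deph W 1 = 1 := by
    simp only [deph, Matrix.mul_one, proj_mul_self hW, sum_proj_eq_one hW]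
  have h := re_star_dotProduct_deph_mulVec W 1 v
  rw [hdeph_one, Matrix.one_mulVec] at h
  rw [h]
  refine sum_congr rfl fun j _ => ?_
  have hnorm : star (W j) ⬝ᵥ W j = 1 := (hW j j).trans (if_pos rfl)
  rw [Matrix.one_mulVec, hnorm, Complex.one_re, one_mul]

lemma re_star_dotProduct_deph_mulVec_le {W : Fin d → Fin d → ℂ} (hW : IsONB W)
    {A : Matrix (Fin d) (Fin d) ℂ} {b : ℝ} (hA : ∀ j, (star (W j) ⬝ᵥ (A *ᵥ W j)).re ≤ b)
    (v : Fin d → ℂ) : (star v ⬝ᵥ (deph W A *ᵥ v)).re ≤ b * (star v ⬝ᵥ v).re := by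
  rw [re_star_dotProduct_deph_mulVec, re_star_dotProduct_self hW, mul_sum]
  exact sum_le_sum fun j _ => mul_le_mul_of_nonneg_right (hA j) (Complex.normSq_nonneg _)

lemma re_star_dotProduct_deph_mulVec_le_trace {W : Fin d → Fin d → ℂ} (hW : IsONB W)
    {A : Matrix (Fin d) (Fin d) ℂ} (hA : A.PosSemidef) {u : Fin d → ℂ} {b : ℝ}
    (hu : ∀ j, Complex.normSq (star (W j) ⬝ᵥ u) ≤ b) :
    (star u ⬝ᵥ (deph W A *ᵥ u)).re ≤ b * A.trace.re := by
  rw [re_star_dotProduct_deph_mulVec, trace_eq_sum_star_dotProduct_mulVec hW, Complex.re_sum,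
    mul_sum]
  refine sum_le_sum fun j _ => ?_
  rw [mul_comm b]
  exact mul_le_mul_of_nonneg_left (hu j) (hA.re_dotProduct_nonneg (W j))

lemma re_star_dotProduct_deph_deph_mulVec_le {X Z : Fin d → Fin d → ℂ} (hX : IsONB X)
    (hZ : IsONB Z) {c : ℝ} (hc : ∀ j k, ‖overlap X Z j k‖ ^ 2 ≤ c)
    {ρ : Matrix (Fin d) (Fin d) ℂ} (hρ : ρ.PosSemidef) (hρ1 : ρ.trace = 1) (v : Fin d → ℂ) :
    (star v ⬝ᵥ (deph Z (deph X ρ) *ᵥ v)).re ≤ c * (star v ⬝ᵥ v).re := by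
  refine re_star_dotProduct_deph_mulVec_le hZ (fun l => ?_) v
  have hoverlap : ∀ j, Complex.normSq (star (X j) ⬝ᵥ Z l) ≤ c := fun j => by
    rw [← Complex.sq_norm]
    exact hc j l
  simpa [hρ1] using re_star_dotProduct_deph_mulVec_le_trace hX hρ hoverlap

lemma trM1M2_postState (X Z : Fin d → Fin d → ℂ) (ρ : Matrix (Fin d) (Fin d) ℂ) :
    trM1M2 (postState X Z ρ) = deph Z (deph X ρ) := by
  ext s s'
  simp only [trM1M2, postState, deph, of_apply, Matrix.mul_sum, Matrix.sum_mul, Matrix.sum_apply,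
    Matrix.mul_assoc]
  exact sum_comm

end Dephasing

lemma Matrix.IsHermitian.eigenvalues_le {n : Type*} [Fintype n] [DecidableEq n]
    {M : Matrix n n ℂ} (hM : M.IsHermitian) {b : ℝ}
    (h : ∀ v, (star v ⬝ᵥ (M *ᵥ v)).re ≤ b * (star v ⬝ᵥ v).re) (i : n) :
    hM.eigenvalues i ≤ b := by
  have hunit : star ⇑(hM.eigenvectorBasis i) ⬝ᵥ ⇑(hM.eigenvectorBasis i) = 1 := by
    rw [dotProduct_comm, ← EuclideanSpace.inner_eq_star_dotProduct, inner_self_eq_norm_sq_to_K,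
      hM.eigenvectorBasis.orthonormal.1 i]
    simp
  simpa [hunit, hM.eigenvalues_eq i] using h (hM.eigenvectorBasis i)

lemma vnEntropy_eq_shannon {n : Type*} [Fintype n] [DecidableEq n] {M : Matrix n n ℂ}
    (hM : M.IsHermitian) : vnEntropy M = shannon hM.eigenvalues := by
  rw [vnEntropy, dif_pos hM, shannon]

lemma logb_one_div_le_shannon {n : Type*} [Fintype n] {p : n → ℝ} (hp0 : ∀ i, 0 ≤ p i)
    (hp1 : ∑ i, p i = 1) {b : ℝ} (hpb : ∀ i, p i ≤ b) : Real.logb 2 (1 / b) ≤ shannon p := by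
  rw [shannon, one_div, Real.logb_inv, neg_le_neg_iff]
  calc ∑ i, p i * Real.logb 2 (p i) ≤ ∑ i, p i * Real.logb 2 b := by
        refine sum_le_sum fun i _ => ?_
        rcases (hp0 i).eq_or_lt with hpi | hpi
        · simp [← hpi]
        · exact mul_le_mul_of_nonneg_left
            (Real.logb_le_logb_of_le one_lt_two hpi (hpb i)) hpi.le
    _ = Real.logb 2 b := by rw [← sum_mul, hp1, one_mul]

lemma logb_one_div_le_vnEntropy {n : Type*} [Fintype n] [DecidableEq n] {M : Matrix n n ℂ}
    (hM : M.PosSemidef) (hM1 : M.trace = 1) {b : ℝ}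
    (h : ∀ v, (star v ⬝ᵥ (M *ᵥ v)).re ≤ b * (star v ⬝ᵥ v).re) :
    Real.logb 2 (1 / b) ≤ vnEntropy M := by
  have hsum : ∑ i, hM.1.eigenvalues i = 1 := by
    simpa [hM1] using (congrArg Complex.re hM.1.trace_eq_sum_eigenvalues).symm
  rw [vnEntropy_eq_shannon hM.1]
  exact logb_one_div_le_shannon hM.eigenvalues_nonneg hsum (hM.1.eigenvalues_le h)

theorem reduced_state_and_entanglement_entropy_general {d : ℕ}
    (X Z : Fin d → Fin d → ℂ) (hX : IsONB X) (hZ : IsONB Z)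
    (c : ℝ)
    (hc : IsGreatest (Set.range fun jk : Fin d × Fin d => ‖overlap X Z jk.1 jk.2‖ ^ 2) c)
    (ρ : Matrix (Fin d) (Fin d) ℂ) (hρ : ρ.PosSemidef) (hρ1 : ρ.trace = 1) :
    trM1M2 (postState X Z ρ) = deph Z (deph X ρ) ∧
    (∀ ψ : Fin d → ℂ, (∑ i, star (ψ i) * ψ i) = 1 →
      ρ = Matrix.of (fun a b => ψ a * star (ψ b)) →
      vnEntropy (trM1M2 (postState X Z ρ)) ≥ Real.logb 2 (1 / c)) := by
  refine ⟨trM1M2_postState X Z ρ, fun _ _ _ => ?_⟩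
  have hc_bound : ∀ j k, ‖overlap X Z j k‖ ^ 2 ≤ c := fun j k => hc.2 ⟨(j, k), rfl⟩
  rw [trM1M2_postState]
  exact logb_one_div_le_vnEntropy ((hρ.deph X).deph Z)
    (by rw [trace_deph hZ, trace_deph hX, hρ1])
    (re_star_dotProduct_deph_deph_mulVec_le hX hZ hc_bound hρ hρ1)

/-- the reduced state on S is D_Z(D_X(ρ_S)), and for pure input the
entanglement entropy across the S : M₁M₂ cut is at least log(1/c). -/
theorem reduced_state_and_entanglement_entropy {d : ℕ} (hd : 0 < d)
    (X Z : Fin d → Fin d → ℂ) (hX : IsONB X) (hZ : IsONB Z)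
    (c : ℝ)
    (hc : IsGreatest (Set.range fun jk : Fin d × Fin d => ‖overlap X Z jk.1 jk.2‖ ^ 2) c)
    (ρ : Matrix (Fin d) (Fin d) ℂ) (hρ : ρ.PosSemidef) (hρ1 : ρ.trace = 1) :
    trM1M2 (postState X Z ρ) = deph Z (deph X ρ) ∧
    (∀ ψ : Fin d → ℂ, (∑ i, star (ψ i) * ψ i) = 1 →
      ρ = Matrix.of (fun a b => ψ a * star (ψ b)) →
      vnEntropy (trM1M2 (postState X Z ρ)) ≥ Real.logb 2 (1 / c)) :=
  reduced_state_and_entanglement_entropy_general X Z hX hZ c hc ρ hρ hρ1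
end
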